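/- Let G be a graph with a total order on its edges and let T be the Tutte polynomial of G defined by the corank-nullity expansion T_G(x,y) = Σ_{S ⊆ E(G)} (x−1)^{κ(S)−κ} (y−1)^{|S|+κ(S)−n}. Then T_G(x̂+ŵ, ŷ+ẑ) = Σ_{S ⊆ E(G)} x̂^{|Î(S)∩S|} ŵ^{|Î(S)\S|} ŷ^{|L̂(S)\S|} ẑ^{|L̂(S)∩S|}. -/

import Mathlib

open scoped Classical

/-- A multigraph with a fixed reference orientation: each edge `e` has a
source `src e` and a target `tgt e` (the positive direction `e⁺ = (src e, tgt e)`). -/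
structure OrGraph (V E : Type) where
  src : E → V
  tgt : E → V

namespace OrGraph

variable {V E : Type} (G : OrGraph V E)

/-- Two vertices are joined by some edge of `S`. -/
def step (S : Set E) (a b : V) : Prop :=
  ∃ e ∈ S, (G.src e = a ∧ G.tgt e = b) ∨ (G.src e = b ∧ G.tgt e = a)

/-- `κ(S)`: the number of connected components of the spanning subgraph `(V, S)`. -/
noncomputable def kappa (S : Set E) : ℕ :=
  Nat.card (Quot (G.step S))

/-- A cut of `G`: a minimal nonempty edge set whose removal increases the
number of connected components. -/
def IsCut (C : Set E) : Prop :=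
  C.Nonempty ∧ G.kappa Cᶜ > G.kappa Set.univ ∧
    ∀ C' : Set E, C' ⊂ C → C'.Nonempty → ¬ (G.kappa C'ᶜ > G.kappa Set.univ)

/-- A cycle of `G`: a minimal nonempty edge set meeting no cut of `G` in
precisely one element. -/
def IsCycle (C : Set E) : Prop :=
  C.Nonempty ∧ (∀ Cu : Set E, G.IsCut Cu → (Cu ∩ C).ncard ≠ 1) ∧
    ∀ C' : Set E, C' ⊂ C → C'.Nonempty →
      ¬ (∀ Cu : Set E, G.IsCut Cu → (Cu ∩ C').ncard ≠ 1)

/-- Head of edge `e` under orientation `O` (`O e = true` means the reference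
direction `src e → tgt e`). -/
def ohead (O : E → Bool) (e : E) : V := if O e then G.tgt e else G.src e

/-- Tail of edge `e` under orientation `O`. -/
def otail (O : E → Bool) (e : E) : V := if O e then G.src e else G.tgt e

/-- Edge `e` crosses the vertex set `U` (exactly one endpoint in `U`). -/
def crossing (U : Set V) (e : E) : Prop := G.src e ∈ U ↔ G.tgt e ∉ U

/-- A directed cut of the orientation `O`: a cut all of whose edges are
oriented consistently out of some vertex set `U`. -/
def IsDirCut (O : E → Bool) (C : Set E) : Prop :=
  G.IsCut C ∧ ∃ U : Set V, (∀ e, e ∈ C ↔ G.crossing U e) ∧ ∀ e ∈ C, G.otail O e ∈ U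

/-- A directed cycle of the orientation `O`: a cycle oriented consistently,
i.e. in-degree equals out-degree at each vertex within the cycle. -/
def IsDirCycle (O : E → Bool) (C : Set E) : Prop :=
  G.IsCycle C ∧ ∀ v : V,
    {e ∈ C | G.ohead O e = v}.ncard = {e ∈ C | G.otail O e = v}.ncard

section Activities

variable [LinearOrder E]

/-- `Î(S)`: cut active edges of the spanning subgraph `S`. -/
def Iact (S : Set E) : Set E :=
  {e | ∃ C : Set E, G.IsCut C ∧ e ∈ C ∧ (∀ f ∈ C, f ≠ e → f ∉ S) ∧ ∀ f ∈ C, e ≤ f}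

/-- `L̂(S)`: cycle active edges of the spanning subgraph `S`. -/
def Lact (S : Set E) : Set E :=
  {e | ∃ C : Set E, G.IsCycle C ∧ e ∈ C ∧ (∀ f ∈ C, f = e ∨ f ∈ S) ∧ ∀ f ∈ C, e ≤ f}

/-- `I(O)`: cut active edges of the orientation `O`. -/
def Ior (O : E → Bool) : Set E :=
  {e | ∃ C : Set E, G.IsDirCut O C ∧ e ∈ C ∧ ∀ f ∈ C, e ≤ f}

/-- `L(O)`: cycle active edges of the orientation `O`. -/
def Lor (O : E → Bool) : Set E :=
  {e | ∃ C : Set E, G.IsDirCycle O C ∧ e ∈ C ∧ ∀ f ∈ C, e ≤ f}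

end Activities

/-- The Tutte polynomial via the corank-nullity expansion, evaluated in a
commutative ring. -/
noncomputable def tutte [Fintype V] [Fintype E] (R : Type) [CommRing R] (x y : R) : R :=
  ∑ S : Finset E, (x - 1) ^ (G.kappa ↑S - G.kappa Set.univ) *
    (y - 1) ^ (S.card + G.kappa ↑S - Fintype.card V)

/-! ### Fourientations.
A fourientation is `F : E → Bool × Bool`, recording whether `e⁺` resp. `e⁻`
belongs to the fourientation. -/

/-- A potential cut of the fourientation `F`: a directed cut each of whose
edges is unoriented in `F` or oriented in the cut direction (out of `U`). -/
def PotCut (F : E → Bool × Bool) (C : Set E) : Prop :=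
  G.IsCut C ∧ ∃ U : Set V, (∀ e, e ∈ C ↔ G.crossing U e) ∧
    ∀ e ∈ C, (G.src e ∈ U → (F e).2 = false) ∧ (G.src e ∉ U → (F e).1 = false)

/-- A potential cycle of the fourientation `F`, with cyclic direction `dir`:
a consistently directed cycle each of whose edges has its `dir`-direction
present in `F` (so each edge is bioriented or oriented in the cycle direction). -/
def PotCycle (F : E → Bool × Bool) (C : Set E) (dir : E → Bool) : Prop :=
  G.IsCycle C ∧
    (∀ v : V, {e ∈ C | G.ohead dir e = v}.ncard = {e ∈ C | G.otail dir e = v}.ncard) ∧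
    ∀ e ∈ C, (if dir e then (F e).1 else (F e).2) = true

/-- Add the direction `d` of edge `e` to the fourientation `F`. -/
def addDir [DecidableEq E] (F : E → Bool × Bool) (e : E) (d : Bool) : E → Bool × Bool :=
  Function.update F e (if d then (true, (F e).2) else ((F e).1, true))

/-- Remove the direction `d` of edge `e` from the fourientation `F`. -/
def remDir [DecidableEq E] (F : E → Bool × Bool) (e : E) (d : Bool) : E → Bool × Bool :=
  Function.update F e (if d then (false, (F e).2) else ((F e).1, false))

/-- `ᵉO`: toggle the status of the edge `e` in the fourientation `F`. -/
def toggle [DecidableEq E] (F : E → Bool × Bool) (e : E) : E → Bool × Bool :=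
  Function.update F e ((F e).2, (F e).1)

section FourActivities

variable [LinearOrder E]

/-- `I^o(O)`: oriented edges that are minimal in some potential cut. -/
def Io (F : E → Bool × Bool) : Set E :=
  {f | (F f).1 ≠ (F f).2 ∧ ∃ C : Set E, G.PotCut F C ∧ f ∈ C ∧ ∀ g ∈ C, f ≤ g}

/-- `L^o(O)`: oriented edges that are minimal in some potential cycle. -/
def Lo (F : E → Bool × Bool) : Set E :=
  {f | (F f).1 ≠ (F f).2 ∧
    ∃ (C : Set E) (dir : E → Bool), G.PotCycle F C dir ∧ f ∈ C ∧ ∀ g ∈ C, f ≤ g}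

/-- `I^u(O)`: unoriented edges `f` minimal in some potential cut of
`O ∪ {f^{σᵤ(f)}}`. -/
def Iu (σu : E → Bool) (F : E → Bool × Bool) : Set E :=
  {f | F f = (false, false) ∧
    ∃ C : Set E, G.PotCut (addDir F f (σu f)) C ∧ f ∈ C ∧ ∀ g ∈ C, f ≤ g}

/-- `L^b(O)`: bioriented edges `f` minimal in some potential cycle of
`O \ {f^{σ_b(f)}}`. -/
def Lb (σb : E → Bool) (F : E → Bool × Bool) : Set E :=
  {f | F f = (true, true) ∧
    ∃ (C : Set E) (dir : E → Bool),
      G.PotCycle (remDir F f (σb f)) C dir ∧ f ∈ C ∧ ∀ g ∈ C, f ≤ g}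

end FourActivities

/-- The deletion `G − e`. -/
def del (e : E) : OrGraph V {f : E // f ≠ e} :=
  ⟨fun f => G.src f.1, fun f => G.tgt f.1⟩

/-- The contraction `G/e`: identify the endpoints of `e` and remove `e`. -/
def contr (e : E) : OrGraph (Quot (fun a b => a = G.src e ∧ b = G.tgt e)) {f : E // f ≠ e} :=
  ⟨fun f => Quot.mk _ (G.src f.1), fun f => Quot.mk _ (G.tgt f.1)⟩

/-! ### Potential walks in a fourientation. A walk step is a pair `(e, d)` of an
edge and a chosen direction (`d = true` for the reference direction). -/

/-- Tail of the directed edge `(e, d)`. -/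
def ftail (p : E × Bool) : V := if p.2 then G.src p.1 else G.tgt p.1

/-- Head of the directed edge `(e, d)`. -/
def fhead (p : E × Bool) : V := if p.2 then G.tgt p.1 else G.src p.1

/-- The direction `d` of `e` is present in the fourientation `F`. -/
def present (F : E → Bool × Bool) (p : E × Bool) : Prop :=
  (if p.2 then (F p.1).1 else (F p.1).2) = true

/-- A potential walk of the fourientation `F` from `a` to `b`: each step uses
a direction present in `F` (so each edge is bioriented or oriented
consistently with the walk). -/
def IsPWalk (F : E → Bool × Bool) : V → List (E × Bool) → V → Prop
  | a, [], b => a = b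
  | a, p :: rest, b => G.ftail p = a ∧ present F p ∧ IsPWalk F (G.fhead p) rest b

/-- A potential path: a potential walk visiting pairwise distinct vertices. -/
def IsPPath (F : E → Bool × Bool) (a : V) (w : List (E × Bool)) (b : V) : Prop :=
  G.IsPWalk F a w b ∧ (a :: w.map G.fhead).Nodup

end OrGraph

/-!
Activity is a connectivity condition: `e ∈ Î(S)` iff the endpoints of `e` are not joined by the
edges below `e` together with the edges of `S` above `e`, and `e ∈ L̂(S)` iff they are joined by
the edges of `S` above `e`. Adding edges one at a time in the order of `E` then shows
`κ(S) - κ = |Î(S) \ S|` and `|S| + κ(S) - n = |L̂(S) ∩ S|`, so the left side equals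
`Σ_S (x̂+ŵ-1)^{|Î(S)\S|} (ŷ+ẑ-1)^{|L̂(S)∩S|}`. Toggling an active edge changes neither `Î` nor
`L̂`, hence the subsets of `E` split into Boolean intervals `{T ∪ B | B ⊆ Î(T) ∪ L̂(T)}` on which
both activities are constant, and by the binomial theorem both sides sum to
`(x̂+ŵ)^{|Î(T)|} (ŷ+ẑ)^{|L̂(T)|}` over each interval.
-/

theorem Set.inter_Ioi_eq_of_sdiff_singleton_eq {α : Type*} [LinearOrder α] {s t : Set α}
    {a b : α} (h : s \ {a} = t \ {a}) (hab : a ≤ b) : s ∩ Set.Ioi b = t ∩ Set.Ioi b := by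
  have hIoi : Set.Ioi b ⊆ {a}ᶜ := fun _ hc => (hab.trans_lt hc).ne'
  rw [← Set.inter_eq_right.2 hIoi, ← Set.inter_assoc, ← Set.inter_assoc, ← Set.sdiff_eq,
    ← Set.sdiff_eq, h]

namespace Finset

variable {α : Type*} [DecidableEq α]

theorem card_eq_card_erase_add_ite (s : Finset α) (a : α) :
    #s = #(s.erase a) + if a ∈ s then 1 else 0 := by
  split_ifs with h
  exacts [(card_erase_add_one h).symm, by rw [erase_eq_of_notMem h, add_zero]]

theorem sum_powerset_union_pow_mul_pow {R : Type*} [CommSemiring R] {I L : Finset α}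
    (h : Disjoint I L) (x w y z : R) :
    ∑ B ∈ (I ∪ L).powerset, x ^ #(I ∩ B) * w ^ #(I \ B) * y ^ #(L \ B) * z ^ #(L ∩ B) =
      (x + w) ^ #I * (y + z) ^ #L := by
  have hprod (B : Finset α) (hB : B ⊆ I ∪ L) (a b : R) :
      ∏ i ∈ B, (if i ∈ I then a else b) = a ^ #(I ∩ B) * b ^ #(L ∩ B) := by
    rw [prod_ite, prod_const, prod_const, filter_mem_eq_inter, inter_comm,
      filter_notMem_eq_sdiff]
    congr 3
    ext i
    simp only [mem_sdiff, mem_inter]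
    exact ⟨fun ⟨hB', hI⟩ => ⟨(mem_union.1 (hB hB')).resolve_left hI, hB'⟩,
      fun ⟨hL, hB'⟩ => ⟨hB', disjoint_right.1 h hL⟩⟩
  calc _ = ∑ B ∈ (I ∪ L).powerset, (∏ i ∈ B, if i ∈ I then x else z) *
        ∏ i ∈ (I ∪ L) \ B, if i ∈ I then w else y := by
        refine sum_congr rfl fun B hB => ?_
        rw [hprod B (mem_powerset.1 hB), hprod _ sdiff_subset, ← inter_sdiff_assoc,
          ← inter_sdiff_assoc, inter_eq_left.2 subset_union_left,
          inter_eq_left.2 subset_union_right]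
        ring
    _ = ∏ i ∈ I ∪ L, ((if i ∈ I then x else z) + if i ∈ I then w else y) :=
        (prod_add _ _ _).symm
    _ = (x + w) ^ #I * (y + z) ^ #L := by
        rw [prod_union h, ← prod_const, ← prod_const]
        congr 1 <;> refine prod_congr rfl fun i hi => ?_
        · rw [if_pos hi, if_pos hi]
        · rw [if_neg (disjoint_right.1 h hi), if_neg (disjoint_right.1 h hi), add_comm]

variable [Fintype α]

theorem sum_eq_sum_image_sdiff_sum_powerset {M : Type*} [AddCommMonoid M]
    {D : Finset α → Finset α} (hD : ∀ S U, U \ D S = S \ D S → D U = D S)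
    (F : Finset α → M) :
    ∑ S, F S =
      ∑ T ∈ univ.image (fun S => S \ D S), ∑ B ∈ (D T).powerset, F (T ∪ B) := by
  refine (sum_image' F fun S _ => ?_).symm
  have hDS : D (S \ D S) = D S := hD S _ (sdiff_idem _ _)
  have hsdiff {B : Finset α} (hB : B ⊆ D S) : (S \ D S ∪ B) \ D S = S \ D S := by
    rw [union_sdiff_distrib, sdiff_idem, sdiff_eq_empty_iff_subset.2 hB, union_empty]
  have hfiber :
      univ.filter (fun U => U \ D U = S \ D S) = (D S).powerset.image (S \ D S ∪ ·) := by
    ext U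
    simp only [mem_filter, mem_univ, true_and, mem_image, mem_powerset]
    constructor
    · intro hU
      have hDU : D U = D S := by rw [← hDS, ← hU, hD U _ (sdiff_idem _ _)]
      exact ⟨U ∩ D S, inter_subset_right, by rw [← hU, hDU, sdiff_union_inter]⟩
    · rintro ⟨B, hB, rfl⟩
      rw [hD S _ (hsdiff hB), hsdiff hB]
  rw [hDS, hfiber, sum_image fun B₁ hB₁ B₂ hB₂ h => ?_]
  have hB (B : Finset α) (hB : B ∈ (D S).powerset) : (S \ D S ∪ B) ∩ D S = B := by
    rw [union_inter_distrib_right, sdiff_inter_self, empty_union,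
      inter_eq_left.2 (mem_powerset.1 hB)]
  rw [← hB B₁ hB₁, ← hB B₂ hB₂]
  exact congr(($h) ∩ D S)

theorem sum_eq_sum_of_sum_powerset_eq {M : Type*} [AddCommMonoid M]
    {D : Finset α → Finset α} (hD : ∀ S U, U \ D S = S \ D S → D U = D S)
    {F H : Finset α → M} (hFH : ∀ T, Disjoint T (D T) →
      ∑ B ∈ (D T).powerset, F (T ∪ B) = ∑ B ∈ (D T).powerset, H (T ∪ B)) :
    ∑ S, F S = ∑ S, H S := by
  rw [sum_eq_sum_image_sdiff_sum_powerset hD F, sum_eq_sum_image_sdiff_sum_powerset hD H]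
  refine sum_congr rfl fun T hT => hFH T ?_
  obtain ⟨S, -, rfl⟩ := mem_image.1 hT
  rw [hD S _ (sdiff_idem _ _)]
  exact sdiff_disjoint

end Finset

namespace OrGraph

variable {V E : Type} {G : OrGraph V E}

instance (A : Set E) : Std.Symm (G.step A) :=
  ⟨fun _ _ ⟨e, he, h⟩ => ⟨e, he, h.symm⟩⟩

variable (G) in
def conn (A : Set E) : V → V → Prop := Relation.ReflTransGen (G.step A)

variable (G) in
/-- In matroid terms, `e` lies in the closure of `A` in the cycle matroid. -/
def Spans (A : Set E) (e : E) : Prop := G.conn A (G.src e) (G.tgt e)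

section Connectivity

open Relation Set

variable {A B : Set E} {a b : V} {e f : E}

theorem conn.refl (A : Set E) (a : V) : G.conn A a a := ReflTransGen.refl

theorem conn.symm (h : G.conn A a b) : G.conn A b a :=
  (ReflTransGen.stdSymm (r := G.step A)).symm a b h

theorem conn.mono (h : G.conn A a b) (hAB : A ⊆ B) : G.conn B a b :=
  ReflTransGen.mono (fun _ _ ⟨e, he, h⟩ => ⟨e, hAB he, h⟩) _ _ h

theorem Spans.mono (h : G.Spans A e) (hAB : A ⊆ B) : G.Spans B e := conn.mono h hAB

theorem spans_of_mem (he : e ∈ A) : G.Spans A e :=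
  ReflTransGen.single ⟨e, he, Or.inl ⟨rfl, rfl⟩⟩

theorem quot_mk_eq_iff : Quot.mk (G.step A) a = Quot.mk (G.step A) b ↔ G.conn A a b := by
  rw [Quot.eq, EqvGen.eqvGen_eq_reflTransGen]; rfl

theorem conn_or_of_conn_insert (h : G.conn (insert f A) a b) :
    G.conn A a b ∨ (G.conn A a (G.src f) ∧ G.conn A (G.tgt f) b) ∨
      (G.conn A a (G.tgt f) ∧ G.conn A (G.src f) b) := by
  induction h with
  | refl => exact Or.inl (conn.refl A a)
  | tail _ hs ih =>
    obtain ⟨g, hg, hends⟩ := hs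
    rcases mem_insert_iff.mp hg with rfl | hgA
    · rcases hends with ⟨rfl, rfl⟩ | ⟨rfl, rfl⟩ <;>
        rcases ih with h | ⟨h, -⟩ | ⟨h, -⟩ <;> simp [h, conn.refl]
    · have hs : G.step A _ _ := ⟨g, hgA, hends⟩
      rcases ih with h | ⟨h₁, h₂⟩ | ⟨h₁, h₂⟩
      exacts [Or.inl (h.tail hs), Or.inr (Or.inl ⟨h₁, h₂.tail hs⟩),
        Or.inr (Or.inr ⟨h₁, h₂.tail hs⟩)]

theorem conn_insert_iff (hf : G.Spans A f) : G.conn (insert f A) a b ↔ G.conn A a b := by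
  refine ⟨fun h => ?_, fun h => h.mono (subset_insert f A)⟩
  rcases conn_or_of_conn_insert h with h | ⟨h₁, h₂⟩ | ⟨h₁, h₂⟩
  exacts [h, h₁.trans (hf.trans h₂), h₁.trans (hf.symm.trans h₂)]

theorem spans_insert_iff (hf : G.Spans A f) : G.Spans (insert f A) e ↔ G.Spans A e :=
  conn_insert_iff hf

/-- The exchange property of the cycle matroid. -/
theorem Spans.insert_swap (h : G.Spans (insert f A) e) (he : ¬ G.Spans A e) :
    G.Spans (insert e A) f := by
  have hA : A ⊆ insert e A := subset_insert e A
  have he' : G.Spans (insert e A) e := spans_of_mem (mem_insert e A)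
  rcases conn_or_of_conn_insert h with h | ⟨h₁, h₂⟩ | ⟨h₁, h₂⟩
  · exact absurd h he
  · exact (h₁.mono hA).symm.trans (he'.trans (h₂.mono hA).symm)
  · exact (h₂.mono hA).trans (he'.symm.trans (h₁.mono hA))

end Connectivity

section Kappa

open Set

variable {A B : Set E} {f : E}

theorem kappa_empty : G.kappa ∅ = Nat.card V := by
  refine (Nat.card_eq_of_bijective (Quot.mk _) ⟨fun a b hab => ?_, Quot.mk_surjective⟩).symm
  exact ((quot_mk_eq_iff.1 hab).cases_tail.resolve_right fun ⟨_, _, _, h, _⟩ => h).symm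

variable [Finite V]

theorem kappa_le_kappa_of_forall_spans (h : ∀ f ∈ B, G.Spans A f) :
    G.kappa A ≤ G.kappa B := by
  refine Nat.card_le_card_of_surjective (Quot.lift (Quot.mk _) ?_)
    (Quot.ind fun a => ⟨Quot.mk _ a, rfl⟩)
  rintro a b ⟨f, hf, ⟨rfl, rfl⟩ | ⟨rfl, rfl⟩⟩
  exacts [quot_mk_eq_iff.2 (h f hf), quot_mk_eq_iff.2 (h f hf).symm]

theorem kappa_antitone : Antitone G.kappa := fun _ _ h =>
  kappa_le_kappa_of_forall_spans fun _ hf => spans_of_mem (h hf)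

theorem kappa_insert_of_spans (h : G.Spans A f) : G.kappa (insert f A) = G.kappa A :=
  (kappa_antitone (subset_insert f A)).antisymm <| kappa_le_kappa_of_forall_spans fun _ hg =>
    (mem_insert_iff.mp hg).elim (· ▸ h) spans_of_mem

/-- The new edge collapses exactly the classes of its two endpoints, so sending the class of
`tgt f` to `none` is a bijection onto `Option`. -/
theorem kappa_eq_kappa_insert_add_one (h : ¬ G.Spans A f) :
    G.kappa A = G.kappa (insert f A) + 1 := by
  let v : Quot (G.step A) := Quot.mk _ (G.tgt f)
  let ψ (q : Quot (G.step A)) : Option (Quot (G.step (insert f A))) :=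
    if q = v then none
    else some (Quot.map id (fun _ _ ⟨g, hg, hends⟩ => ⟨g, mem_insert_of_mem f hg, hends⟩) q)
  have hψ : Function.Bijective ψ := by
    refine ⟨Quot.ind fun a => Quot.ind fun b hab => ?_, ?_⟩
    · simp only [ψ, v] at hab
      split_ifs at hab with ha hb hb
      · exact ha.trans hb.symm
      · rw [quot_mk_eq_iff] at ha hb ⊢
        rcases conn_or_of_conn_insert (quot_mk_eq_iff.1 (Option.some_injective _ hab)) with
          h | ⟨-, h⟩ | ⟨h, -⟩
        exacts [h, absurd h.symm hb, absurd h ha]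
    · rintro (_ | q)
      · exact ⟨v, if_pos rfl⟩
      induction q using Quot.ind with | _ b
      by_cases hb : Quot.mk (G.step A) b = v
      · refine ⟨Quot.mk _ (G.src f), ?_⟩
        rw [show ψ _ = _ from if_neg fun hu => h (quot_mk_eq_iff.1 hu)]
        refine congrArg some (quot_mk_eq_iff.2 ?_)
        exact (spans_of_mem (mem_insert f A)).trans
          ((quot_mk_eq_iff.1 hb).symm.mono (subset_insert f A))
      · exact ⟨_, if_neg hb⟩
  rw [kappa, Nat.card_eq_of_bijective ψ hψ, Finite.card_option, kappa]

theorem kappa_eq_kappa_insert_add_ite :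
    G.kappa A = G.kappa (insert f A) + if G.Spans A f then 0 else 1 := by
  split_ifs with h
  exacts [(kappa_insert_of_spans h).symm, kappa_eq_kappa_insert_add_one h]

end Kappa

section CutsAndCycles

open Set

variable [Finite V] {A B C : Set E} {e : E}

theorem not_spans_of_isCut (hC : G.IsCut C) (he : e ∈ C) (hA : Disjoint A C) :
    ¬ G.Spans A e := by
  intro hspans
  have hκ : G.kappa (C \ {e})ᶜ = G.kappa Cᶜ := by
    rw [compl_sdiff, singleton_union]
    exact kappa_insert_of_spans (hspans.mono (subset_compl_iff_disjoint_right.2 hA))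
  rcases (C \ {e}).eq_empty_or_nonempty with hCe | hCe
  · have := hC.2.1
    rwa [← hκ, hCe, compl_empty, gt_iff_lt, lt_self_iff_false] at this
  · exact hC.2.2 _ (sdiff_singleton_ssubset.2 he) hCe (hκ ▸ hC.2.1)

variable [Finite E]

/-- A maximal `B ⊇ A` not spanning `e` is a hyperplane of the cycle matroid; its complement
is the cut. -/
theorem exists_isCut_of_not_spans (h : ¬ G.Spans A e) :
    ∃ C, G.IsCut C ∧ e ∈ C ∧ Disjoint A C := by
  obtain ⟨B, hAB, hBmax⟩ := (toFinite {B | ¬ G.Spans B e}).exists_le_maximal (a := A) h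
  have heB : e ∉ B := fun he => hBmax.1 (spans_of_mem he)
  have hmax : ∀ g ∉ B, G.Spans (insert g B) e := fun g hg => by_contra fun hn =>
    hg (hBmax.2 hn (subset_insert g B) (mem_insert g B))
  have hspans_all : ∀ g ∉ B, ∀ f, G.Spans (insert g B) f := by
    intro g hg f
    by_cases hf : f ∈ B
    · exact spans_of_mem (mem_insert_of_mem g hf)
    · rw [← spans_insert_iff (hmax g hg)]
      exact ((hmax f hf).insert_swap hBmax.1).mono (insert_subset_insert (subset_insert g B))
  refine ⟨Bᶜ, ⟨⟨e, heB⟩, ?_, fun C' hC' _ hgt => ?_⟩, heB,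
    disjoint_compl_right_iff_subset.2 hAB⟩
  · rw [compl_compl, kappa_eq_kappa_insert_add_one hBmax.1]
    exact Nat.lt_succ_of_le (kappa_antitone (subset_univ _))
  · obtain ⟨g, hgB, hgC'⟩ := exists_of_ssubset hC'
    have hsub : insert g B ⊆ C'ᶜ :=
      insert_subset hgC' fun f hf hfC' => hC'.1 hfC' hf
    have : G.kappa C'ᶜ ≤ G.kappa univ := (kappa_antitone hsub).trans
      (kappa_le_kappa_of_forall_spans fun f _ => hspans_all g hgB f)
    omega

theorem forall_isCut_ncard_inter_ne_one_iff :
    (∀ D, G.IsCut D → (D ∩ C).ncard ≠ 1) ↔ ∀ e ∈ C, G.Spans (C \ {e}) e := by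
  refine ⟨fun h e he => by_contra fun hn => ?_, fun h D hD hcard => ?_⟩
  · obtain ⟨D, hD, heD, hdisj⟩ := exists_isCut_of_not_spans hn
    refine h D hD (ncard_eq_one.2 ⟨e, ?_⟩)
    refine Subset.antisymm (fun f ⟨hfD, hfC⟩ => by_contra fun hfe =>
      disjoint_left.1 hdisj ⟨hfC, hfe⟩ hfD) (singleton_subset_iff.2 ⟨heD, he⟩)
  · obtain ⟨g, hg⟩ := ncard_eq_one.1 hcard
    have hgDC : g ∈ D ∩ C := hg ▸ rfl
    refine not_spans_of_isCut hD hgDC.1 (disjoint_left.2 fun f hf hfD => hf.2 ?_) (h g hgDC.2)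
    exact hg ▸ (⟨hfD, hf.1⟩ : f ∈ D ∩ C)

theorem isCycle_iff : G.IsCycle C ↔ C.Nonempty ∧ (∀ e ∈ C, G.Spans (C \ {e}) e) ∧
    ∀ C' ⊂ C, C'.Nonempty → ¬ ∀ e ∈ C', G.Spans (C' \ {e}) e := by
  simp only [IsCycle, forall_isCut_ncard_inter_ne_one_iff]

theorem IsCycle.spans_sdiff_singleton (hC : G.IsCycle C) (he : e ∈ C) :
    G.Spans (C \ {e}) e :=
  (isCycle_iff.1 hC).2.1 e he

/-- A minimal `P ⊆ B` spanning `e` is a path; closing it with `e` gives the cycle. -/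
theorem exists_isCycle_of_spans (heB : e ∉ B) (h : G.Spans B e) :
    ∃ C, G.IsCycle C ∧ e ∈ C ∧ C ⊆ insert e B := by
  obtain ⟨P, hPB, hPmin⟩ := (toFinite {P | G.Spans P e}).exists_le_minimal (a := B) h
  have heP : e ∉ P := fun he => heB (hPB he)
  have hmin : ∀ g ∈ P, ¬ G.Spans (P \ {g}) e := fun g hg hn =>
    (hPmin.2 hn sdiff_subset hg).2 rfl
  refine ⟨insert e P, isCycle_iff.2 ⟨⟨e, mem_insert e P⟩, fun g hg => ?_,
    fun C' hC' hne hcyc => ?_⟩, mem_insert e P, insert_subset_insert hPB⟩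
  · rcases eq_or_ne g e with rfl | hge
    · rw [insert_sdiff_self_of_notMem heP]; exact hPmin.1
    · have hgP : g ∈ P := (mem_insert_iff.1 hg).resolve_left hge
      rw [← insert_sdiff_singleton_comm hge.symm]
      refine Spans.insert_swap ?_ (hmin g hgP)
      rw [insert_sdiff_self_of_mem hgP]; exact hPmin.1
  · by_cases heC' : e ∈ C'
    · have hsub : C' \ {e} ⊆ P := fun f ⟨hf, hfe⟩ =>
        (mem_insert_iff.1 (hC'.1 hf)).resolve_left hfe
      refine hC'.2 (insert_subset heC' fun f hf => ?_)
      exact (hPmin.2 (hcyc e heC') hsub hf).1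
    · obtain ⟨g, hg⟩ := hne
      have hsub : C' ⊆ P := fun f hf =>
        (mem_insert_iff.1 (hC'.1 hf)).resolve_left (ne_of_mem_of_not_mem hf heC')
      have hgP : G.Spans (P \ {g}) g := (hcyc g hg).mono (sdiff_subset_sdiff_left hsub)
      refine hmin g (hsub hg) ?_
      rw [← spans_insert_iff hgP, insert_sdiff_self_of_mem (hsub hg)]
      exact hPmin.1

end CutsAndCycles

section Activities

open Set

variable [Finite V] [Finite E] [LinearOrder E] {S S' U A : Set E} {e f : E}

theorem mem_Iact_iff : e ∈ G.Iact S ↔ ¬ G.Spans (Iio e ∪ S ∩ Ioi e) e := by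
  constructor
  · rintro ⟨C, hC, heC, hS, hmin⟩
    refine not_spans_of_isCut hC heC (disjoint_right.2 fun f hfC hf => ?_)
    rcases hf with hfe | ⟨hfS, hef⟩
    exacts [(hmin f hfC).not_gt hfe, hS f hfC hef.ne' hfS]
  · intro h
    obtain ⟨C, hC, heC, hdisj⟩ := exists_isCut_of_not_spans h
    refine ⟨C, hC, heC, fun f hfC hfe hfS => ?_, fun f hfC => not_lt.1 fun hfe => ?_⟩
    · rcases hfe.lt_or_gt with hfe | hef
      exacts [disjoint_right.1 hdisj hfC (Or.inl hfe),
        disjoint_right.1 hdisj hfC (Or.inr ⟨hfS, hef⟩)]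
    · exact disjoint_right.1 hdisj hfC (Or.inl hfe)

theorem mem_Lact_iff : e ∈ G.Lact S ↔ G.Spans (S ∩ Ioi e) e := by
  constructor
  · rintro ⟨C, hC, heC, hS, hmin⟩
    refine (hC.spans_sdiff_singleton heC).mono fun f ⟨hfC, hfe⟩ => ?_
    exact ⟨(hS f hfC).resolve_left hfe, (hmin f hfC).lt_of_ne (Ne.symm hfe)⟩
  · intro h
    obtain ⟨C, hC, heC, hCS⟩ := exists_isCycle_of_spans (fun he => lt_irrefl e he.2) h
    refine ⟨C, hC, heC, fun f hf => ?_, fun f hf => ?_⟩ <;>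
      rcases mem_insert_iff.1 (hCS hf) with rfl | hf
    exacts [Or.inl rfl, Or.inr hf.1, le_rfl, hf.2.le]

theorem disjoint_Iact_Lact : Disjoint (G.Iact S) (G.Lact S) :=
  disjoint_left.2 fun _ hI hL => mem_Iact_iff.1 hI ((mem_Lact_iff.1 hL).mono subset_union_right)

/-- An active edge `f` above `e` never decides whether `e` is spanned: if `f` is cut active it
is a bridge of everything below it, if it is cycle active it is spanned by the edges above it. -/
theorem spans_sdiff_singleton_iff_of_active (hf : f ∈ G.Iact S ∪ G.Lact S) (hef : e < f)
    (hA : A ∩ Ioi f = S ∩ Ioi f) : G.Spans (A \ {f}) e ↔ G.Spans A e := by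
  by_cases hfA : f ∈ A
  swap
  · rw [sdiff_singleton_eq_self hfA]
  conv_rhs => rw [← insert_sdiff_self_of_mem hfA]
  rcases hf with hI | hL
  · refine ⟨fun h => h.mono (subset_insert f _), fun h => by_contra fun hn => ?_⟩
    refine mem_Iact_iff.1 hI ((h.insert_swap hn).mono (insert_subset (Or.inl hef) ?_))
    rintro g ⟨hgA, hgf⟩
    rcases (show g ≠ f from hgf).lt_or_gt with hgf | hfg
    exacts [Or.inl hgf, Or.inr (by rw [← hA]; exact ⟨hgA, hfg⟩)]
  · rw [mem_Lact_iff, ← hA] at hL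
    exact (spans_insert_iff (hL.mono (B := A \ {f}) fun g hg => ⟨hg.1, hg.2.ne'⟩)).symm

theorem Iact_eq_of_sdiff_singleton_eq (hS : S' \ {f} = S \ {f})
    (hf : f ∈ G.Iact S ∪ G.Lact S) : G.Iact S' = G.Iact S := by
  ext e
  rcases lt_or_ge e f with hef | hfe
  · have hA (T : Set E) (hT : T ∩ Ioi f = S ∩ Ioi f) :
        (Iio e ∪ T ∩ Ioi e) ∩ Ioi f = S ∩ Ioi f := by
      rw [union_inter_distrib_right, inter_assoc, Ioi_inter_Ioi, sup_eq_right.2 hef.le, hT,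
        Iio_inter_Ioi, Ioo_eq_empty hef.le.not_gt, empty_union]
    rw [mem_Iact_iff, mem_Iact_iff,
      ← spans_sdiff_singleton_iff_of_active hf hef
        (hA S' (inter_Ioi_eq_of_sdiff_singleton_eq hS le_rfl)),
      ← spans_sdiff_singleton_iff_of_active hf hef (hA S rfl), union_sdiff_distrib,
      union_sdiff_distrib, inter_sdiff_right_comm, inter_sdiff_right_comm, hS]
  · rw [mem_Iact_iff, mem_Iact_iff, inter_Ioi_eq_of_sdiff_singleton_eq hS hfe]

theorem Lact_eq_of_sdiff_singleton_eq (hS : S' \ {f} = S \ {f})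
    (hf : f ∈ G.Iact S ∪ G.Lact S) : G.Lact S' = G.Lact S := by
  ext e
  rcases lt_or_ge e f with hef | hfe
  · have hA (T : Set E) (hT : T ∩ Ioi f = S ∩ Ioi f) :
        T ∩ Ioi e ∩ Ioi f = S ∩ Ioi f := by
      rw [inter_assoc, Ioi_inter_Ioi, sup_eq_right.2 hef.le, hT]
    rw [mem_Lact_iff, mem_Lact_iff,
      ← spans_sdiff_singleton_iff_of_active hf hef
        (hA S' (inter_Ioi_eq_of_sdiff_singleton_eq hS le_rfl)),
      ← spans_sdiff_singleton_iff_of_active hf hef (hA S rfl), inter_sdiff_right_comm,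
      inter_sdiff_right_comm, hS]
  · rw [mem_Lact_iff, mem_Lact_iff, inter_Ioi_eq_of_sdiff_singleton_eq hS hfe]

/-- Toggling active edges one at a time, each remains active by the single-edge case. -/
theorem Iact_eq_and_Lact_eq_of_sdiff_eq
    (hU : U \ (G.Iact S ∪ G.Lact S) = S \ (G.Iact S ∪ G.Lact S)) :
    G.Iact U = G.Iact S ∧ G.Lact U = G.Lact S := by
  suffices h : ∀ (D : Finset E) (S : Set E), ↑D ⊆ G.Iact S ∪ G.Lact S →
      (∀ g ∉ D, g ∈ U ↔ g ∈ S) → G.Iact U = G.Iact S ∧ G.Lact U = G.Lact S by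
    refine h (toFinite (G.Iact S ∪ G.Lact S)).toFinset S (by simp) fun g hg => ?_
    simp only [Finite.mem_toFinset, mem_union, not_or] at hg
    simpa [hg.1, hg.2] using congr(g ∈ $hU)
  intro D
  induction D using Finset.induction_on with
  | empty => exact fun S _ hUS => by rw [ext fun g => hUS g (Finset.notMem_empty g)]; simp
  | insert f D hfD ih =>
    intro S hD hUS
    have hf : f ∈ G.Iact S ∪ G.Lact S := hD (Finset.mem_insert_self f D)
    have hS₁ : (S \ {f} ∪ U ∩ {f}) \ {f} = S \ {f} := by
      rw [union_sdiff_distrib, inter_sdiff_assoc, Set.sdiff_self, inter_empty, union_empty,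
        sdiff_idem]
    rw [← Iact_eq_of_sdiff_singleton_eq hS₁ hf, ← Lact_eq_of_sdiff_singleton_eq hS₁ hf]
      at hD ⊢
    refine ih _ ((Finset.coe_subset.2 (Finset.subset_insert f D)).trans hD) fun g hg => ?_
    rcases eq_or_ne g f with rfl | hgf
    · simp
    · simp [hgf, hUS g (by simp [hgf, hg])]

end Activities

section Counting

open Finset

variable [Fintype E] [LinearOrder E] {S : Finset E} {e : E}

variable (G) in
noncomputable def cutActive (S : Finset E) : Finset E := (G.Iact S).toFinset

variable (G) in
noncomputable def cycleActive (S : Finset E) : Finset E := (G.Lact S).toFinset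

@[simp] theorem mem_cutActive : e ∈ G.cutActive S ↔ e ∈ G.Iact S := Set.mem_toFinset

@[simp] theorem mem_cycleActive : e ∈ G.cycleActive S ↔ e ∈ G.Lact S := Set.mem_toFinset

variable [Fintype V]

/-- Adding the edges outside `S` in increasing order, the edge `a` merges two components exactly
when it is cut active for `S`. -/
theorem kappa_eq_kappa_univ_add_card_cutActive_sdiff (S : Finset E) :
    G.kappa S = G.kappa Set.univ + #(G.cutActive S \ S) := by
  suffices h : ∀ T : Finset E, G.kappa ↑Tᶜ = G.kappa Set.univ + #(G.cutActive Tᶜ \ Tᶜ) by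
    simpa using h Sᶜ
  intro T
  induction T using Finset.induction_on_min with
  | empty => simp
  | insert a T ha ih =>
    set S := (insert a T)ᶜ with hS
    have haS : a ∉ S := by simp [hS]
    have hmemS (g : E) (hga : g ≠ a) : g ∉ S ↔ g ∈ T := by simp [hS, hga]
    have hT : Tᶜ = insert a S := by
      rw [hS, compl_insert, insert_erase (mem_compl.2 fun h => lt_irrefl a (ha a h))]
    rw [hT] at ih
    have hW : Set.Iio a ∪ ↑S ∩ Set.Ioi a = ↑S := by
      refine Set.Subset.antisymm (Set.union_subset (fun g hga => by_contra fun hgS => ?_)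
        Set.inter_subset_left) fun g hg => ?_
      · exact (ha g ((hmemS g (ne_of_lt hga)).1 hgS)).not_gt hga
      · exact (lt_or_gt_of_ne (ne_of_mem_of_not_mem hg haS)).imp_right (⟨hg, ·⟩)
    have herase : (G.cutActive S \ S).erase a = G.cutActive (insert a S) \ insert a S := by
      ext g
      rcases eq_or_ne g a with rfl | hga
      · simp
      have hdiff : insert a (↑S : Set E) \ {a} = ↑S \ {a} :=
        Set.insert_sdiff_of_mem _ (Set.mem_singleton a)
      simp only [mem_erase, mem_sdiff, mem_cutActive, mem_insert, hga, ne_eq,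
        not_false_eq_true, true_and, false_or, coe_insert]
      refine and_congr_left fun hg => ?_
      rw [mem_Iact_iff, mem_Iact_iff,
        Set.inter_Ioi_eq_of_sdiff_singleton_eq hdiff (ha g ((hmemS g hga).1 hg)).le]
    rw [kappa_eq_kappa_insert_add_ite (f := a), ← coe_insert, ih,
      card_eq_card_erase_add_ite (G.cutActive S \ S) a, herase]
    simp only [mem_sdiff, mem_cutActive, mem_Iact_iff, hW]
    by_cases h : G.Spans ↑S a <;> simp [h, haS, add_assoc]

/-- Adding the edges of `S` in decreasing order, the edge `a` closes a cycle exactly when it is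
cycle active for `S`. -/
theorem card_add_kappa_eq_card_add_card_cycleActive_inter (S : Finset E) :
    #S + G.kappa S = Fintype.card V + #(G.cycleActive S ∩ S) := by
  induction S using Finset.induction_on_min with
  | empty => simp [kappa_empty, Nat.card_eq_fintype_card]
  | insert a S ha ih =>
    have haS : a ∉ S := fun h => lt_irrefl a (ha a h)
    have hZ : ↑(insert a S) ∩ Set.Ioi a = (↑S : Set E) := by
      rw [coe_insert, Set.insert_inter_of_notMem Set.self_notMem_Ioi]
      exact Set.inter_eq_left.2 fun g hg => ha g hg
    have herase : (G.cycleActive (insert a S) ∩ insert a S).erase a = G.cycleActive S ∩ S := by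
      ext g
      rcases eq_or_ne g a with rfl | hga
      · simp [haS]
      have hdiff : insert a (↑S : Set E) \ {a} = ↑S \ {a} :=
        Set.insert_sdiff_of_mem _ (Set.mem_singleton a)
      simp only [mem_erase, mem_inter, mem_cycleActive, mem_insert, hga, ne_eq,
        not_false_eq_true, true_and, false_or, coe_insert]
      refine and_congr_left fun hg => ?_
      rw [mem_Lact_iff, mem_Lact_iff,
        Set.inter_Ioi_eq_of_sdiff_singleton_eq hdiff (ha g hg).le]
    rw [kappa_eq_kappa_insert_add_ite (f := a), ← coe_insert] at ih
    rw [card_eq_card_erase_add_ite (G.cycleActive (insert a S) ∩ insert a S) a, herase,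
      card_insert_of_notMem haS]
    simp only [mem_inter, mem_cycleActive, mem_Lact_iff, hZ]
    by_cases h : G.Spans ↑S a <;> simp [h] at ih ⊢ <;> omega

end Counting

section Expansion

open Finset

variable [Fintype V] [Fintype E] [LinearOrder E]

variable (G) in
noncomputable def active (S : Finset E) : Finset E := G.cutActive S ∪ G.cycleActive S

theorem cutActive_eq_and_cycleActive_eq_of_sdiff_eq {S U : Finset E}
    (h : U \ G.active S = S \ G.active S) :
    G.cutActive U = G.cutActive S ∧ G.cycleActive U = G.cycleActive S := by
  have h' : (↑U : Set E) \ (G.Iact S ∪ G.Lact S) = ↑S \ (G.Iact S ∪ G.Lact S) := by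
    simpa [active, cutActive, cycleActive] using congr((↑$h : Set E))
  obtain ⟨hI, hL⟩ := Iact_eq_and_Lact_eq_of_sdiff_eq h'
  simp [cutActive, cycleActive, hI, hL]

/-- Each class of the partition of the subsets of `E` into intervals `{T ∪ B | B ⊆ active T}`
contributes `(x + w) ^ #(cutActive T) * (y + z) ^ #(cycleActive T)` to either side. -/
theorem sum_pow_card_cutActive_sdiff_mul_pow_card_cycleActive_inter {R : Type*} [CommRing R]
    (x w y z : R) :
    ∑ S, (x + w - 1) ^ #(G.cutActive S \ S) * (y + z - 1) ^ #(G.cycleActive S ∩ S) =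
      ∑ S, x ^ #(G.cutActive S ∩ S) * w ^ #(G.cutActive S \ S) *
        y ^ #(G.cycleActive S \ S) * z ^ #(G.cycleActive S ∩ S) := by
  refine sum_eq_sum_of_sum_powerset_eq (D := G.active) (fun S U h => ?_) fun T hT => ?_
  · obtain ⟨hI, hL⟩ := cutActive_eq_and_cycleActive_eq_of_sdiff_eq h
    rw [active, hI, hL, active]
  have hIL : Disjoint (G.cutActive T) (G.cycleActive T) :=
    Set.disjoint_toFinset.2 disjoint_Iact_Lact
  have hunion (B X : Finset E) (hX : Disjoint X T) :
      X ∩ (T ∪ B) = X ∩ B ∧ X \ (T ∪ B) = X \ B :=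
    ⟨by rw [inter_union_distrib_left, disjoint_iff_inter_eq_empty.1 hX, empty_union],
      by rw [sdiff_union_distrib, sdiff_eq_self_of_disjoint hX, inter_eq_right.2 sdiff_subset]⟩
  have hact (B : Finset E) (hB : B ∈ (G.active T).powerset) :
      G.cutActive (T ∪ B) = G.cutActive T ∧ G.cycleActive (T ∪ B) = G.cycleActive T :=
    cutActive_eq_and_cycleActive_eq_of_sdiff_eq (by
      rw [union_sdiff_distrib, sdiff_eq_empty_iff_subset.2 (mem_powerset.1 hB),
        union_empty])
  have hIT : Disjoint (G.cutActive T) T := (hT.mono_right subset_union_left).symm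
  have hLT : Disjoint (G.cycleActive T) T := (hT.mono_right subset_union_right).symm
  calc _ = ∑ B ∈ (G.cutActive T ∪ G.cycleActive T).powerset,
        (1 : R) ^ #(G.cutActive T ∩ B) * (x + w - 1) ^ #(G.cutActive T \ B) *
          1 ^ #(G.cycleActive T \ B) * (y + z - 1) ^ #(G.cycleActive T ∩ B) := by
        refine sum_congr rfl fun B hB => ?_
        rw [(hact B hB).1, (hact B hB).2, (hunion B _ hIT).2, (hunion B _ hLT).1, one_pow,
          one_pow, one_mul, mul_one]
    _ = (x + w) ^ #(G.cutActive T) * (y + z) ^ #(G.cycleActive T) := by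
        rw [sum_powerset_union_pow_mul_pow hIL, add_sub_cancel, add_sub_cancel]
    _ = _ := by
        rw [← sum_powerset_union_pow_mul_pow hIL]
        refine sum_congr rfl fun B hB => ?_
        rw [(hact B hB).1, (hact B hB).2, (hunion B _ hIT).1, (hunion B _ hIT).2,
          (hunion B _ hLT).1, (hunion B _ hLT).2]

end Expansion

end OrGraph

/-- Gordon–Traldi generalized activities expansion:
`T_G(x̂+ŵ, ŷ+ẑ) = Σ_S x̂^{|Î(S)∩S|} ŵ^{|Î(S)\S|} ŷ^{|L̂(S)\S|} ẑ^{|L̂(S)∩S|}`. -/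
theorem gordon_traldi {V E : Type} [Fintype V] [Fintype E] [LinearOrder E]
    (G : OrGraph V E) (R : Type) [CommRing R] (x w y z : R) :
    G.tutte R (x + w) (y + z) =
      ∑ S : Finset E,
        x ^ (G.Iact ↑S ∩ ↑S).ncard * w ^ (G.Iact ↑S \ ↑S).ncard *
          y ^ (G.Lact ↑S \ ↑S).ncard * z ^ (G.Lact ↑S ∩ ↑S).ncard := by
  have hexp (S : Finset E) : G.kappa ↑S - G.kappa Set.univ = (G.cutActive S \ S).card ∧
      S.card + G.kappa ↑S - Fintype.card V = (G.cycleActive S ∩ S).card := by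
    have := G.kappa_eq_kappa_univ_add_card_cutActive_sdiff S
    have := G.card_add_kappa_eq_card_add_card_cycleActive_inter S
    omega
  have hncard (S : Finset E) (s : Set E) : (s ∩ ↑S).ncard = (s.toFinset ∩ S).card ∧
      (s \ ↑S).ncard = (s.toFinset \ S).card := by
    constructor <;> rw [← Set.ncard_coe_finset] <;> simp
  simp only [OrGraph.tutte, hexp, hncard]
  exact G.sum_pow_card_cutActive_sdiff_mul_pow_card_cycleActive_inter x w y z
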